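/- Let Γ ⊂ Ω be a finite maximal antichain, let n ∈ ℕ with n ≥ card(Γ), and let 0 < r < ∞. Then, with L := η^3 ξ^{3h}, V_{n,r}(μ_h) ≤ inf{ L Σ_{σ∈Γ} μ_h(J_σ) ‖φ'_σ‖^r V_{n_σ,r}(μ_h) : (n_σ)_{σ∈Γ} positive integers with Σ_{σ∈Γ} n_σ ≤ n }. -/

import Mathlib

open MeasureTheory Filter Metric

noncomputable section

/-- A cookie-cutter system on `J = [0,1]`. -/
structure CookieCutter where
  N : ℕ
  hN : 2 ≤ N
  Jsub : Fin N → Set ℝ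
  f : ℝ → ℝ
  φ : Fin N → ℝ → ℝ
  c : ℝ
  γ : ℝ
  b : ℝ
  B : ℝ
  hJsub_sub : ∀ j, Jsub j ⊆ Set.Icc 0 1
  hJsub_interval : ∀ j, ∃ u v : ℝ, u ≤ v ∧ Jsub j = Set.Icc u v
  hJsub_disj : ∀ i j, i ≠ j → Disjoint (Jsub i) (Jsub j)
  hbij : ∀ j, Set.BijOn f (Jsub j) (Set.Icc 0 1)
  hφ_maps : ∀ j, ∀ x ∈ Set.Icc (0:ℝ) 1, φ j x ∈ Jsub j
  hφ_rinv : ∀ j, ∀ x ∈ Set.Icc (0:ℝ) 1, f (φ j x) = x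
  hφ_linv : ∀ j, ∀ x ∈ Jsub j, φ j (f x) = x
  hfdiff : ∀ j, ∀ x ∈ Jsub j, DifferentiableAt ℝ f x
  hφdiff : ∀ j, ∀ x ∈ Set.Icc (0:ℝ) 1, DifferentiableAt ℝ (φ j) x
  hc : 0 < c
  hγ : γ ∈ Set.Ioc (0:ℝ) 1
  hHolder : ∀ j, ∀ x ∈ Jsub j, ∀ y ∈ Jsub j, |deriv f x - deriv f y| ≤ c * |x - y| ^ γ
  hb : IsGLB ((fun x => |deriv f x|) '' ⋃ j, Jsub j) b
  hB : IsLUB ((fun x => |deriv f x|) '' ⋃ j, Jsub j) B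
  hb1 : 1 < b

namespace CookieCutter

variable (cc : CookieCutter)

/-- `φ_σ = φ_{σ_1} ∘ ⋯ ∘ φ_{σ_n}` for a word `σ`. -/
def wordMap : List (Fin cc.N) → ℝ → ℝ
  | [] => id
  | j :: rest => cc.φ j ∘ wordMap rest

/-- The basic interval `J_σ = φ_σ(J)`. -/
def Jc (σ : List (Fin cc.N)) : Set ℝ := cc.wordMap σ '' Set.Icc 0 1

/-- The diameter `|J_σ|`. -/
def diamJ (σ : List (Fin cc.N)) : ℝ := Metric.diam (cc.Jc σ)

/-- `‖φ'_σ‖ = sup_{x ∈ J} |φ'_σ(x)|`. -/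
def φnorm (σ : List (Fin cc.N)) : ℝ :=
  sSup ((fun x => |deriv (cc.wordMap σ) x|) '' Set.Icc 0 1)

/-- The distortion constant `ξ = exp (c / (b^γ − 1))`. -/
def xi : ℝ := Real.exp (cc.c / (cc.b ^ cc.γ - 1))

/-- The cookie-cutter set `E = ⋂_{n ≥ 1} ⋃_{σ ∈ Ω_n} J_σ`. -/
def E : Set ℝ := ⋂ (n : ℕ) (_ : 1 ≤ n), ⋃ σ : Fin n → Fin cc.N, cc.Jc (List.ofFn σ)

/-- `η = ξ^{9h}`. -/
def eta (h : ℝ) : ℝ := cc.xi ^ ((9:ℝ) * h)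

/-- `L = η³ ξ^{3h}`. -/
def Lconst (h : ℝ) : ℝ := (cc.eta h) ^ 3 * cc.xi ^ ((3:ℝ) * h)

/-- A Gibbs-like measure for the cookie-cutter system: a Borel probability measure
supported on `E` with `η⁻¹|J_σ|^h ≤ μ(J_σ) ≤ η|J_σ|^h` for every word `σ`. -/
def IsGibbsLike (μ : Measure ℝ) (h : ℝ) : Prop :=
  IsProbabilityMeasure μ ∧ μ (cc.Eᶜ) = 0 ∧
    ∀ σ : List (Fin cc.N), σ ≠ [] →
      (cc.eta h)⁻¹ * cc.diamJ σ ^ h ≤ (μ (cc.Jc σ)).toReal ∧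
      (μ (cc.Jc σ)).toReal ≤ cc.eta h * cc.diamJ σ ^ h

/-- A finite maximal antichain in `Ω`. -/
def IsFMA (Γ : Finset (List (Fin cc.N))) : Prop :=
  (∀ σ ∈ Γ, σ ≠ []) ∧
  (∀ ω : ℕ → Fin cc.N, ∃ k : ℕ, 1 ≤ k ∧ (List.ofFn fun i : Fin k => ω i) ∈ Γ) ∧
  ∀ σ ∈ Γ, ∀ τ ∈ Γ, σ <+: τ → σ = τ

end CookieCutter

/-- The `n`-th quantization error of order `r`. -/
def Vnr (μ : Measure ℝ) (n : ℕ) (r : ℝ) : ℝ :=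
  sInf ((fun α : Finset ℝ => ∫ x, Metric.infDist x (α : Set ℝ) ^ r ∂μ) ''
    {α : Finset ℝ | α.Nonempty ∧ α.card ≤ n})

/-- The auxiliary quantization error `u_{n,r}` with `U = (0,1)`. -/
def unr (μ : Measure ℝ) (n : ℕ) (r : ℝ) : ℝ :=
  sInf ((fun α : Finset ℝ =>
      ∫ x, Metric.infDist x ((α : Set ℝ) ∪ (Set.Ioo (0:ℝ) 1)ᶜ) ^ r ∂μ) ''
    {α : Finset ℝ | α.card ≤ n})

/-!
In each cylinder `J_σ`, `σ ∈ Γ`, place the image under `φ_σ` of a near-optimal `n_σ`-point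
quantizer of `μ`. Bounded distortion gives `‖φ'_σ‖ ≤ ξ |J_σ|`, which together with the Gibbs
property makes `μ` quasi-multiplicative on cylinders: `μ(J_{στ}) ≤ η³ ξ^h μ(J_σ) μ(J_τ)`. Hence,
tested on the cylinders of generation `m` and letting `m → ∞`, the restriction of `μ` to `J_σ` is
at most `η³ ξ^h μ(J_σ)` times the image of `μ` under `φ_σ`, a map contracting distances by
`‖φ'_σ‖`. The cylinders of `Γ` are disjoint and cover the support of `μ`, and `η³ ξ^h ≤ L`.
-/

open Set Topology

lemma le_of_forall_pos_le_add_mul {a b K : ℝ} (hK : 0 ≤ K)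
    (h : ∀ ε : ℝ, 0 < ε → a ≤ b + K * ε) : a ≤ b := by
  refine le_of_forall_pos_le_add fun ε hε => (h (ε / (K + 1)) (by positivity)).trans ?_
  gcongr
  rw [← mul_div_assoc, div_le_iff₀ (by positivity)]
  nlinarith

lemma Metric.infDist_image_le_mul {X Y : Type*} [PseudoMetricSpace X] [PseudoMetricSpace Y]
    {f : X → Y} {K : ℝ} (hK : 0 ≤ K) (hf : ∀ x y, dist (f x) (f y) ≤ K * dist x y)
    (x : X) (s : Set X) : infDist (f x) (f '' s) ≤ K * infDist x s := by
  rcases s.eq_empty_or_nonempty with rfl | hs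
  · simp
  have := hs.to_subtype
  rw [infDist_eq_iInf (s := s), Real.mul_iInf_of_nonneg hK]
  exact le_ciInf fun y => (infDist_le_dist_of_mem (mem_image_of_mem f y.2)).trans (hf x y)

lemma Continuous.integrable_of_ae_mem_Icc {μ : Measure ℝ} [IsFiniteMeasure μ] {a b : ℝ}
    (hμ : ∀ᵐ x ∂μ, x ∈ Icc a b) {f : ℝ → ℝ} (hf : Continuous f) : Integrable f μ := by
  rw [← Measure.restrict_eq_self_of_ae_mem hμ]
  exact hf.integrableOn_Icc

lemma setIntegral_le_mul_setIntegral_of_le_const {X : Type*} [MeasurableSpace X] {μ : Measure X}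
    [IsFiniteMeasure μ] {s t : Set X} (hs : MeasurableSet s) (ht : MeasurableSet t)
    {g k : X → ℝ} (hg : IntegrableOn g s μ) (hk : IntegrableOn k t μ) {c K : ℝ}
    (hc : 0 ≤ c) (hK : 0 ≤ K) (hst : μ.real s ≤ K * μ.real t)
    (hgc : ∀ x ∈ s, g x ≤ c) (hck : ∀ y ∈ t, c ≤ k y) :
    ∫ x in s, g x ∂μ ≤ K * ∫ y in t, k y ∂μ := by
  calc ∫ x in s, g x ∂μ ≤ ∫ _ in s, c ∂μ := setIntegral_mono_on hg integrableOn_const hs hgc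
    _ = μ.real s * c := by rw [setIntegral_const, smul_eq_mul]
    _ ≤ K * (μ.real t * c) := by rw [← mul_assoc]; gcongr
    _ = K * ∫ _ in t, c ∂μ := by rw [setIntegral_const, smul_eq_mul]
    _ ≤ K * ∫ y in t, k y ∂μ :=
      mul_le_mul_of_nonneg_left (setIntegral_mono_on integrableOn_const hk ht hck) hK

lemma Vnr_nonneg (μ : Measure ℝ) (n : ℕ) (r : ℝ) : 0 ≤ Vnr μ n r :=
  Real.sInf_nonneg <| by
    rintro _ ⟨α, -, rfl⟩
    exact integral_nonneg fun x => Real.rpow_nonneg infDist_nonneg r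

lemma Vnr_le_integral (μ : Measure ℝ) (r : ℝ) {n : ℕ} {α : Finset ℝ} (hα : α.Nonempty)
    (hcard : α.card ≤ n) : Vnr μ n r ≤ ∫ x, infDist x (α : Set ℝ) ^ r ∂μ := by
  refine csInf_le ⟨0, ?_⟩ ⟨α, ⟨hα, hcard⟩, rfl⟩
  rintro _ ⟨β, -, rfl⟩
  exact integral_nonneg fun x => Real.rpow_nonneg infDist_nonneg r

lemma exists_integral_le_Vnr_add (μ : Measure ℝ) (r : ℝ) {n : ℕ} (hn : 1 ≤ n) {ε : ℝ}
    (hε : 0 < ε) : ∃ α : Finset ℝ, α.Nonempty ∧ α.card ≤ n ∧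
      ∫ x, infDist x (α : Set ℝ) ^ r ∂μ ≤ Vnr μ n r + ε := by
  have hne : ((fun α : Finset ℝ => ∫ x, infDist x (α : Set ℝ) ^ r ∂μ) ''
      {α : Finset ℝ | α.Nonempty ∧ α.card ≤ n}).Nonempty :=
    ⟨_, {0}, ⟨Finset.singleton_nonempty 0, by simpa using hn⟩, rfl⟩
  obtain ⟨_, ⟨α, ⟨hα, hcard⟩, rfl⟩, hlt⟩ := Real.lt_sInf_add_pos hne hε
  exact ⟨α, hα, hcard, hlt.le⟩

namespace CookieCutter

variable (cc : CookieCutter)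

local notation "𝕁" => Icc (0:ℝ) 1

lemma b_pos : 0 < cc.b := one_pos.trans cc.hb1

lemma le_abs_deriv_f {j : Fin cc.N} {x : ℝ} (hx : x ∈ cc.Jsub j) : cc.b ≤ |deriv cc.f x| :=
  cc.hb.1 ⟨x, mem_iUnion.2 ⟨j, hx⟩, rfl⟩

lemma deriv_f_mul_deriv_φ (j : Fin cc.N) {s : ℝ} (hs : s ∈ 𝕁) :
    deriv cc.f (cc.φ j s) * deriv (cc.φ j) s = 1 := by
  have hcomp : HasDerivWithinAt (cc.f ∘ cc.φ j) (deriv cc.f (cc.φ j s) * deriv (cc.φ j) s) 𝕁 s :=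
    ((cc.hfdiff j _ (cc.hφ_maps j s hs)).hasDerivAt.comp s
      (cc.hφdiff j s hs).hasDerivAt).hasDerivWithinAt
  have hid : HasDerivWithinAt id (deriv cc.f (cc.φ j s) * deriv (cc.φ j) s) 𝕁 s :=
    hcomp.congr (fun y hy => (cc.hφ_rinv j y hy).symm) (cc.hφ_rinv j s hs).symm
  exact (uniqueDiffOn_Icc_zero_one s hs).eq_deriv _ hid (hasDerivWithinAt_id s 𝕁)

lemma abs_deriv_φ_eq (j : Fin cc.N) {s : ℝ} (hs : s ∈ 𝕁) :
    |deriv (cc.φ j) s| = |deriv cc.f (cc.φ j s)|⁻¹ := by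
  rw [← abs_inv, (DivisionMonoid.inv_eq_of_mul _ _ (cc.deriv_f_mul_deriv_φ j hs)).symm]

lemma abs_deriv_φ_le (j : Fin cc.N) {s : ℝ} (hs : s ∈ 𝕁) : |deriv (cc.φ j) s| ≤ cc.b⁻¹ := by
  rw [cc.abs_deriv_φ_eq j hs]
  exact inv_anti₀ cc.b_pos (cc.le_abs_deriv_f (cc.hφ_maps j s hs))

lemma wordMap_mem (σ : List (Fin cc.N)) {x : ℝ} (hx : x ∈ 𝕁) : cc.wordMap σ x ∈ 𝕁 := by
  induction σ with
  | nil => exact hx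
  | cons j ρ ih => exact cc.hJsub_sub j (cc.hφ_maps j _ ih)

lemma differentiableAt_wordMap (σ : List (Fin cc.N)) {x : ℝ} (hx : x ∈ 𝕁) :
    DifferentiableAt ℝ (cc.wordMap σ) x := by
  induction σ with
  | nil => exact differentiableAt_id
  | cons j ρ ih => exact (cc.hφdiff j _ (cc.wordMap_mem ρ hx)).comp x ih

lemma deriv_wordMap_cons (j : Fin cc.N) (ρ : List (Fin cc.N)) {x : ℝ} (hx : x ∈ 𝕁) :
    deriv (cc.wordMap (j :: ρ)) x = deriv (cc.φ j) (cc.wordMap ρ x) * deriv (cc.wordMap ρ) x :=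
  deriv_comp x (cc.hφdiff j _ (cc.wordMap_mem ρ hx)) (cc.differentiableAt_wordMap ρ hx)

lemma abs_deriv_wordMap_le_pow (σ : List (Fin cc.N)) {x : ℝ} (hx : x ∈ 𝕁) :
    |deriv (cc.wordMap σ) x| ≤ cc.b⁻¹ ^ σ.length := by
  induction σ with
  | nil => simp [wordMap]
  | cons j ρ ih =>
    rw [cc.deriv_wordMap_cons j ρ hx, abs_mul, List.length_cons, pow_succ']
    exact mul_le_mul (cc.abs_deriv_φ_le j (cc.wordMap_mem ρ hx)) ih (abs_nonneg _)
      (inv_nonneg.2 cc.b_pos.le)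

lemma φnorm_nonneg (σ : List (Fin cc.N)) : 0 ≤ cc.φnorm σ :=
  Real.sSup_nonneg <| by rintro _ ⟨x, -, rfl⟩; exact abs_nonneg _

lemma abs_deriv_le_φnorm (σ : List (Fin cc.N)) {x : ℝ} (hx : x ∈ 𝕁) :
    |deriv (cc.wordMap σ) x| ≤ cc.φnorm σ :=
  le_csSup ⟨cc.b⁻¹ ^ σ.length, by rintro _ ⟨z, hz, rfl⟩; exact cc.abs_deriv_wordMap_le_pow σ hz⟩
    ⟨x, hx, rfl⟩

lemma φnorm_le (σ : List (Fin cc.N)) {C : ℝ} (hC : ∀ x ∈ 𝕁, |deriv (cc.wordMap σ) x| ≤ C) :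
    cc.φnorm σ ≤ C :=
  csSup_le ⟨_, 0, left_mem_Icc.2 zero_le_one, rfl⟩ <| by rintro _ ⟨x, hx, rfl⟩; exact hC x hx

lemma dist_wordMap_le (σ : List (Fin cc.N)) {x y : ℝ} (hx : x ∈ 𝕁) (hy : y ∈ 𝕁) :
    dist (cc.wordMap σ x) (cc.wordMap σ y) ≤ cc.φnorm σ * dist x y := by
  simpa only [dist_eq_norm] using (convex_Icc (0:ℝ) 1).norm_image_sub_le_of_norm_deriv_le
    (fun z hz => cc.differentiableAt_wordMap σ hz) (fun z hz => cc.abs_deriv_le_φnorm σ hz) hy hx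

/-- Quantizers are transported by this map: it agrees with `φ_σ` on `J` and, unlike `φ_σ`,
is `‖φ'_σ‖`-Lipschitz on all of `ℝ`. -/
def clampedWordMap (σ : List (Fin cc.N)) (x : ℝ) : ℝ :=
  cc.wordMap σ (projIcc 0 1 zero_le_one x)

lemma dist_clampedWordMap_le (σ : List (Fin cc.N)) (x y : ℝ) :
    dist (cc.clampedWordMap σ x) (cc.clampedWordMap σ y) ≤ cc.φnorm σ * dist x y := by
  refine (cc.dist_wordMap_le σ (projIcc 0 1 zero_le_one x).2 (projIcc 0 1 zero_le_one y).2).trans ?_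
  gcongr
  · exact cc.φnorm_nonneg σ
  · rw [← Subtype.dist_eq]
    simpa using (LipschitzWith.projIcc (zero_le_one' ℝ)).dist_le_mul x y

lemma infDist_wordMap_le (σ : List (Fin cc.N)) (α : Set ℝ) {y : ℝ} (hy : y ∈ 𝕁) :
    infDist (cc.wordMap σ y) (cc.clampedWordMap σ '' α) ≤ cc.φnorm σ * infDist y α := by
  have hclamp : cc.clampedWordMap σ y = cc.wordMap σ y := by
    rw [clampedWordMap, projIcc_of_mem _ hy]
  simpa only [hclamp] using
    infDist_image_le_mul (cc.φnorm_nonneg σ) (cc.dist_clampedWordMap_le σ) y α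

lemma Jc_nil : cc.Jc [] = 𝕁 := image_id _

lemma Jc_subset (σ : List (Fin cc.N)) : cc.Jc σ ⊆ 𝕁 := by
  rintro _ ⟨y, hy, rfl⟩
  exact cc.wordMap_mem σ hy

lemma wordMap_zero_mem_Jc (σ : List (Fin cc.N)) : cc.wordMap σ 0 ∈ cc.Jc σ :=
  ⟨0, left_mem_Icc.2 zero_le_one, rfl⟩

lemma isCompact_Jc (σ : List (Fin cc.N)) : IsCompact (cc.Jc σ) :=
  isCompact_Icc.image_of_continuousOn fun _ hx =>
    (cc.differentiableAt_wordMap σ hx).continuousAt.continuousWithinAt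

lemma measurableSet_Jc (σ : List (Fin cc.N)) : MeasurableSet (cc.Jc σ) :=
  (cc.isCompact_Jc σ).isClosed.measurableSet

lemma dist_le_diamJ (σ : List (Fin cc.N)) {x y : ℝ} (hx : x ∈ cc.Jc σ) (hy : y ∈ cc.Jc σ) :
    dist x y ≤ cc.diamJ σ :=
  dist_le_diam_of_mem (cc.isCompact_Jc σ).isBounded hx hy

lemma wordMap_append (σ τ : List (Fin cc.N)) :
    cc.wordMap (σ ++ τ) = cc.wordMap σ ∘ cc.wordMap τ := by
  induction σ with
  | nil => rfl
  | cons j ρ ih => exact congrArg (cc.φ j ∘ ·) ih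

lemma Jc_append (σ τ : List (Fin cc.N)) : cc.Jc (σ ++ τ) = cc.wordMap σ '' cc.Jc τ := by
  rw [Jc, Jc, wordMap_append, image_comp]

lemma Jc_cons (j : Fin cc.N) (σ : List (Fin cc.N)) : cc.Jc (j :: σ) = cc.φ j '' cc.Jc σ :=
  image_comp _ _ _

lemma Jc_subset_of_prefix {σ τ : List (Fin cc.N)} (hp : σ <+: τ) : cc.Jc τ ⊆ cc.Jc σ := by
  obtain ⟨t, rfl⟩ := hp
  rw [Jc_append]
  exact image_mono (cc.Jc_subset t)

lemma diamJ_nonneg (σ : List (Fin cc.N)) : 0 ≤ cc.diamJ σ := diam_nonneg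

lemma diamJ_append_le (σ τ : List (Fin cc.N)) :
    cc.diamJ (σ ++ τ) ≤ cc.φnorm σ * cc.diamJ τ := by
  rw [diamJ, Jc_append]
  refine diam_le_of_forall_dist_le (mul_nonneg (cc.φnorm_nonneg σ) (cc.diamJ_nonneg τ)) ?_
  rintro _ ⟨u, hu, rfl⟩ _ ⟨v, hv, rfl⟩
  exact (cc.dist_wordMap_le σ (cc.Jc_subset τ hu) (cc.Jc_subset τ hv)).trans
    (mul_le_mul_of_nonneg_left (cc.dist_le_diamJ τ hu hv) (cc.φnorm_nonneg σ))

lemma diamJ_le_pow (σ : List (Fin cc.N)) : cc.diamJ σ ≤ cc.b⁻¹ ^ σ.length := by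
  have hJ : cc.diamJ [] = 1 := by rw [diamJ, Jc_nil, Real.diam_Icc zero_le_one, sub_zero]
  calc cc.diamJ σ = cc.diamJ (σ ++ []) := by rw [List.append_nil]
    _ ≤ cc.φnorm σ := by simpa [hJ] using cc.diamJ_append_le σ []
    _ ≤ cc.b⁻¹ ^ σ.length := cc.φnorm_le σ fun x hx => cc.abs_deriv_wordMap_le_pow σ hx

/-- `1/|f'|` inherits the Hölder continuity of `f'` because `|f'| ≥ b > 1`. -/
lemma abs_deriv_φ_le_exp_mul (j : Fin cc.N) {u v : ℝ} (hu : u ∈ 𝕁) (hv : v ∈ 𝕁) :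
    |deriv (cc.φ j) u| ≤
      Real.exp (cc.c * |cc.φ j u - cc.φ j v| ^ cc.γ) * |deriv (cc.φ j) v| := by
  set d := cc.c * |cc.φ j u - cc.φ j v| ^ cc.γ
  set X := |deriv cc.f (cc.φ j u)|
  set Y := |deriv cc.f (cc.φ j v)|
  have hX : 1 ≤ X := cc.hb1.le.trans (cc.le_abs_deriv_f (cc.hφ_maps j u hu))
  have hY : 0 < Y := cc.b_pos.trans_le (cc.le_abs_deriv_f (cc.hφ_maps j v hv))
  have hd : 0 ≤ d := mul_nonneg cc.hc.le (Real.rpow_nonneg (abs_nonneg _) _)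
  have hYX : Y ≤ X + d := by
    have := cc.hHolder j _ (cc.hφ_maps j v hv) _ (cc.hφ_maps j u hu)
    rw [abs_sub_comm (cc.φ j v)] at this
    linarith [abs_sub_abs_le_abs_sub (deriv cc.f (cc.φ j v)) (deriv cc.f (cc.φ j u))]
  rw [cc.abs_deriv_φ_eq j hu, cc.abs_deriv_φ_eq j hv, ← div_eq_mul_inv, le_div_iff₀ hY,
    inv_mul_le_iff₀ (by positivity)]
  nlinarith [Real.add_one_le_exp d]

lemma abs_deriv_wordMap_le_exp_mul (σ : List (Fin cc.N)) {x y : ℝ} (hx : x ∈ 𝕁) (hy : y ∈ 𝕁) :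
    |deriv (cc.wordMap σ) x| ≤
      Real.exp (cc.c * ∑ i ∈ Finset.Ico 1 (σ.length + 1), (cc.b⁻¹ ^ cc.γ) ^ i) *
        |deriv (cc.wordMap σ) y| := by
  induction σ with
  | nil => simp [wordMap]
  | cons j ρ ih =>
    have hgap : |cc.φ j (cc.wordMap ρ x) - cc.φ j (cc.wordMap ρ y)| ^ cc.γ ≤
        (cc.b⁻¹ ^ cc.γ) ^ (ρ.length + 1) := by
      rw [Real.rpow_pow_comm (inv_nonneg.2 cc.b_pos.le)]
      refine Real.rpow_le_rpow (abs_nonneg _) ?_ cc.hγ.1.le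
      rw [← Real.dist_eq, ← List.length_cons]
      exact (cc.dist_le_diamJ (j :: ρ) ⟨x, hx, rfl⟩ ⟨y, hy, rfl⟩).trans (cc.diamJ_le_pow _)
    have hstep := cc.abs_deriv_φ_le_exp_mul j (cc.wordMap_mem ρ hx) (cc.wordMap_mem ρ hy)
    rw [cc.deriv_wordMap_cons j ρ hx, cc.deriv_wordMap_cons j ρ hy, abs_mul, abs_mul,
      List.length_cons, Finset.sum_Ico_succ_top (by omega), mul_add, Real.exp_add]
    calc |deriv (cc.φ j) (cc.wordMap ρ x)| * |deriv (cc.wordMap ρ) x|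
        ≤ (Real.exp (cc.c * (cc.b⁻¹ ^ cc.γ) ^ (ρ.length + 1)) *
            |deriv (cc.φ j) (cc.wordMap ρ y)|) *
          (Real.exp (cc.c * ∑ i ∈ Finset.Ico 1 (ρ.length + 1), (cc.b⁻¹ ^ cc.γ) ^ i) *
            |deriv (cc.wordMap ρ) y|) := by
          refine mul_le_mul (hstep.trans ?_) ih (abs_nonneg _) (by positivity)
          gcongr
          exact cc.hc.le
      _ = _ := by ring

lemma distortion_sum_le (k : ℕ) :
    cc.c * ∑ i ∈ Finset.Ico 1 (k + 1), (cc.b⁻¹ ^ cc.γ) ^ i ≤ cc.c / (cc.b ^ cc.γ - 1) := by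
  have hbγ : 1 < cc.b ^ cc.γ := Real.one_lt_rpow cc.hb1 cc.hγ.1
  have hq : cc.b⁻¹ ^ cc.γ = (cc.b ^ cc.γ)⁻¹ := Real.inv_rpow cc.b_pos.le _
  have hq1 : cc.b⁻¹ ^ cc.γ < 1 := hq ▸ inv_lt_one_of_one_lt₀ hbγ
  refine mul_le_mul_of_nonneg_left ((geom_sum_Ico_le_of_lt_one
    (Real.rpow_nonneg (inv_nonneg.2 cc.b_pos.le) _) hq1).trans_eq ?_)
    cc.hc.le
  rw [pow_one, hq]
  field_simp

lemma xi_nonneg : 0 ≤ cc.xi := (Real.exp_pos _).le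

lemma one_le_xi : 1 ≤ cc.xi :=
  Real.one_le_exp (div_nonneg cc.hc.le (sub_nonneg.2 (Real.one_lt_rpow cc.hb1 cc.hγ.1).le))

lemma eta_pos (h : ℝ) : 0 < cc.eta h := Real.rpow_pos_of_pos (Real.exp_pos _) _

lemma eta_pow_mul_xi_rpow_nonneg (h : ℝ) : 0 ≤ cc.eta h ^ 3 * cc.xi ^ h :=
  mul_nonneg (pow_nonneg (cc.eta_pos h).le 3) (Real.rpow_nonneg cc.xi_nonneg h)

lemma φnorm_le_xi_mul_diamJ (σ : List (Fin cc.N)) : cc.φnorm σ ≤ cc.xi * cc.diamJ σ := by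
  obtain ⟨z, hz, hslope⟩ := exists_deriv_eq_slope (cc.wordMap σ) zero_lt_one
    (fun x hx => (cc.differentiableAt_wordMap σ hx).continuousAt.continuousWithinAt)
    (fun x hx => (cc.differentiableAt_wordMap σ (Ioo_subset_Icc_self hx)).differentiableWithinAt)
  have hz_le : |deriv (cc.wordMap σ) z| ≤ cc.diamJ σ := by
    rw [hslope, sub_zero, div_one, ← Real.dist_eq]
    exact cc.dist_le_diamJ σ ⟨1, right_mem_Icc.2 zero_le_one, rfl⟩ (cc.wordMap_zero_mem_Jc σ)
  refine cc.φnorm_le σ fun x hx => ?_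
  calc |deriv (cc.wordMap σ) x|
      ≤ Real.exp (cc.c * ∑ i ∈ Finset.Ico 1 (σ.length + 1), (cc.b⁻¹ ^ cc.γ) ^ i) *
          |deriv (cc.wordMap σ) z| :=
        cc.abs_deriv_wordMap_le_exp_mul σ hx (Ioo_subset_Icc_self hz)
    _ ≤ cc.xi * cc.diamJ σ :=
        mul_le_mul (Real.exp_le_exp.2 (cc.distortion_sum_le _)) hz_le (abs_nonneg _) cc.xi_nonneg

lemma injOn_φ (j : Fin cc.N) : InjOn (cc.φ j) 𝕁 :=
  LeftInvOn.injOn (f₁' := cc.f) fun x hx => cc.hφ_rinv j x hx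

lemma Jc_disjoint_of_not_prefix :
    ∀ σ τ : List (Fin cc.N), ¬ σ <+: τ → ¬ τ <+: σ → Disjoint (cc.Jc σ) (cc.Jc τ)
  | [], _, h, _ => absurd List.nil_prefix h
  | _, [], _, h => absurd List.nil_prefix h
  | i :: σ, j :: τ, hστ, hτσ => by
    by_cases hij : i = j
    · subst hij
      have hd := Jc_disjoint_of_not_prefix σ τ
        (fun hp => hστ (List.cons_prefix_cons.2 ⟨rfl, hp⟩))
        (fun hp => hτσ (List.cons_prefix_cons.2 ⟨rfl, hp⟩))
      rw [Jc_cons, Jc_cons, disjoint_iff_inter_eq_empty,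
        ← (cc.injOn_φ i).image_inter (cc.Jc_subset σ) (cc.Jc_subset τ), hd.inter_eq, image_empty]
    · refine Disjoint.mono ?_ ?_ (cc.hJsub_disj i j hij) <;>
        rintro _ ⟨y, hy, rfl⟩ <;> exact cc.hφ_maps _ _ (cc.wordMap_mem _ hy)

lemma Jc_disjoint_of_length_eq {σ τ : List (Fin cc.N)} (hlen : σ.length = τ.length)
    (hne : σ ≠ τ) : Disjoint (cc.Jc σ) (cc.Jc τ) :=
  cc.Jc_disjoint_of_not_prefix σ τ (fun hp => hne (hp.eq_of_length hlen))
    (fun hp => hne (hp.eq_of_length hlen.symm).symm)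

lemma take_eq_of_mem_Jc {x : ℝ} {σ τ : List (Fin cc.N)} (hσ : x ∈ cc.Jc σ) (hτ : x ∈ cc.Jc τ)
    (hle : σ.length ≤ τ.length) : τ.take σ.length = σ := by
  by_contra hne
  refine disjoint_left.1 (cc.Jc_disjoint_of_length_eq ?_ hne)
    (cc.Jc_subset_of_prefix (List.take_prefix _ _) hτ) hσ
  rw [List.length_take, min_eq_left hle]

lemma mem_E_iff {x : ℝ} :
    x ∈ cc.E ↔ ∀ n : ℕ, 1 ≤ n → ∃ σ : Fin n → Fin cc.N, x ∈ cc.Jc (List.ofFn σ) := by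
  simp [E]

lemma E_subset_Icc : cc.E ⊆ 𝕁 := fun x hx => by
  obtain ⟨σ, hσ⟩ := cc.mem_E_iff.1 hx 1 le_rfl
  exact cc.Jc_subset _ hσ

lemma E_inter_Jc_subset_iUnion (σ : List (Fin cc.N)) {m : ℕ} (hm : 0 < m) :
    cc.E ∩ cc.Jc σ ⊆ ⋃ τ : Fin m → Fin cc.N, cc.Jc (σ ++ List.ofFn τ) := by
  rintro x ⟨hxE, hxσ⟩
  obtain ⟨ρ, hρ⟩ := cc.mem_E_iff.1 hxE (σ.length + m) (by omega)
  have hsplit : List.ofFn ρ = σ ++ (List.ofFn ρ).drop σ.length := by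
    conv_lhs => rw [← List.take_append_drop σ.length (List.ofFn ρ),
      cc.take_eq_of_mem_Jc hxσ hρ (by simp)]
  set t := (List.ofFn ρ).drop σ.length
  have ht : List.ofFn (fun i : Fin m => t[i.1]'(by simp [t])) = t :=
    List.ext_getElem (by simp [t]) (by simp)
  exact mem_iUnion.2 ⟨_, by rwa [ht, ← hsplit]⟩

variable {cc} in
lemma IsFMA.E_subset_biUnion {Γ : Finset (List (Fin cc.N))} (hΓ : cc.IsFMA Γ) :
    cc.E ⊆ ⋃ σ ∈ Γ, cc.Jc σ := by
  intro x hx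
  choose s hs using fun k : ℕ => cc.mem_E_iff.1 hx (k + 1) k.succ_pos
  have hpre : ∀ i k, i ≤ k → List.ofFn (s i) <+: List.ofFn (s k) := fun i k hik => by
    rw [← cc.take_eq_of_mem_Jc (hs i) (hs k) (by simpa)]
    exact List.take_prefix _ _
  set ω : ℕ → Fin cc.N := fun i => s i (Fin.last i)
  have hω : ∀ k, (List.ofFn fun i : Fin (k + 1) => ω i) = List.ofFn (s k) := fun k =>
    List.ext_getElem (by simp) fun i hi _ => by
      have := (hpre i k (by simp at hi; omega)).getElem (i := i) (by simp)
      simp only [List.getElem_ofFn] at this ⊢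
      exact this
  obtain ⟨_ | k, hk, hkΓ⟩ := hΓ.2.1 ω
  · omega
  · exact mem_iUnion₂.2 ⟨_, hkΓ, hω k ▸ hs k⟩

variable {cc} in
lemma IsFMA.pairwise_disjoint_Jc {Γ : Finset (List (Fin cc.N))} (hΓ : cc.IsFMA Γ) :
    (Γ : Set (List (Fin cc.N))).Pairwise (Function.onFun Disjoint cc.Jc) := fun σ hσ τ hτ hne =>
  cc.Jc_disjoint_of_not_prefix σ τ (fun hp => hne (hΓ.2.2 σ hσ τ hτ hp))
    (fun hp => hne (hΓ.2.2 τ hτ σ hσ hp).symm)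

variable {cc} in
lemma IsFMA.nonempty {Γ : Finset (List (Fin cc.N))} (hΓ : cc.IsFMA Γ) : Γ.Nonempty :=
  let ⟨_, _, hkΓ⟩ := hΓ.2.1 fun _ => ⟨0, by have := cc.hN; omega⟩
  ⟨_, hkΓ⟩

section

variable {μ : Measure ℝ}

lemma sum_setIntegral_Jc_le_integral (m : ℕ) {f : ℝ → ℝ} (hf : Integrable f μ)
    (hf0 : 0 ≤ f) : ∑ τ : Fin m → Fin cc.N, ∫ x in cc.Jc (List.ofFn τ), f x ∂μ ≤ ∫ x, f x ∂μ := by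
  rw [← integral_biUnion_finset Finset.univ (fun τ _ => cc.measurableSet_Jc _) ?_
    fun τ _ => hf.integrableOn]
  · exact setIntegral_le_integral hf (Eventually.of_forall hf0)
  · intro τ₁ _ τ₂ _ hne
    exact cc.Jc_disjoint_of_length_eq (by simp) fun h => hne (List.ofFn_inj.1 h)

variable (hE : μ cc.Eᶜ = 0)
include hE

lemma ae_mem_Icc : ∀ᵐ x ∂μ, x ∈ 𝕁 :=
  (ae_iff.2 hE : ∀ᵐ x ∂μ, x ∈ cc.E).mono fun _ hx => cc.E_subset_Icc hx

lemma setIntegral_Jc_eq_sum (σ : List (Fin cc.N)) {m : ℕ} (hm : 0 < m) {f : ℝ → ℝ}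
    (hf : Integrable f μ) :
    ∫ x in cc.Jc σ, f x ∂μ = ∑ τ : Fin m → Fin cc.N, ∫ x in cc.Jc (σ ++ List.ofFn τ), f x ∂μ := by
  have hcover : cc.Jc σ =ᵐ[μ] ⋃ τ ∈ (Finset.univ : Finset (Fin m → Fin cc.N)),
      cc.Jc (σ ++ List.ofFn τ) := by
    refine ae_eq_set.2 ⟨measure_mono_null ?_ hE, ?_⟩
    · rintro x ⟨hxσ, hx⟩ hxE
      exact hx (by simpa using cc.E_inter_Jc_subset_iUnion σ hm ⟨hxE, hxσ⟩)
    · rw [sdiff_eq_empty.2 (iUnion₂_subset fun τ _ =>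
        cc.Jc_subset_of_prefix (List.prefix_append _ _)), measure_empty]
  rw [setIntegral_congr_set hcover, integral_biUnion_finset _ (fun τ _ => cc.measurableSet_Jc _)
    ?_ fun τ _ => hf.integrableOn]
  intro τ₁ _ τ₂ _ hne
  exact cc.Jc_disjoint_of_length_eq (by simp)
    fun h => hne (List.ofFn_inj.1 (List.append_cancel_left h))

lemma integral_eq_sum_setIntegral_Jc {Γ : Finset (List (Fin cc.N))} (hΓ : cc.IsFMA Γ)
    {f : ℝ → ℝ} (hf : Integrable f μ) : ∫ x, f x ∂μ = ∑ σ ∈ Γ, ∫ x in cc.Jc σ, f x ∂μ := by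
  have hcover : (univ : Set ℝ) =ᵐ[μ] ⋃ σ ∈ Γ, cc.Jc σ :=
    ae_eq_set.2 ⟨measure_mono_null (fun _ hx hxE => hx.2 (hΓ.E_subset_biUnion hxE)) hE,
      by simp⟩
  rw [← setIntegral_univ, setIntegral_congr_set hcover, integral_biUnion_finset Γ
    (fun σ _ => cc.measurableSet_Jc σ) hΓ.pairwise_disjoint_Jc fun σ _ => hf.integrableOn]

end

namespace IsGibbsLike

variable {cc} {μ : Measure ℝ} {h : ℝ} (hμ : cc.IsGibbsLike μ h)
include hμ

lemma integrable_rpow_mul_infDist_add {r : ℝ} (hr : 0 ≤ r) (s : Set ℝ) (a d : ℝ) :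
    Integrable (fun y => (a * (infDist y s + d)) ^ r) μ :=
  have := hμ.1
  ((continuous_const.mul ((continuous_infDist_pt s).add continuous_const)).rpow_const
    fun _ => Or.inr hr).integrable_of_ae_mem_Icc (cc.ae_mem_Icc hμ.2.1)

lemma integrable_infDist_rpow {r : ℝ} (hr : 0 ≤ r) (s : Set ℝ) :
    Integrable (fun y => infDist y s ^ r) μ := by
  simpa using hμ.integrable_rpow_mul_infDist_add hr s 1 0

lemma measure_Jc_append_le (hh : 0 ≤ h) {σ τ : List (Fin cc.N)} (hσ : σ ≠ []) (hτ : τ ≠ []) :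
    (μ (cc.Jc (σ ++ τ))).toReal ≤
      cc.eta h ^ 3 * cc.xi ^ h * ((μ (cc.Jc σ)).toReal * (μ (cc.Jc τ)).toReal) := by
  have hdiam : ∀ {ρ}, ρ ≠ [] → cc.diamJ ρ ^ h ≤ cc.eta h * (μ (cc.Jc ρ)).toReal := fun hρ =>
    (inv_mul_le_iff₀ (cc.eta_pos h)).1 (hμ.2.2 _ hρ).1
  have hη := (cc.eta_pos h).le
  calc (μ (cc.Jc (σ ++ τ))).toReal ≤ cc.eta h * cc.diamJ (σ ++ τ) ^ h :=
        (hμ.2.2 _ (by simp [hσ])).2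
    _ ≤ cc.eta h * (cc.xi * cc.diamJ σ * cc.diamJ τ) ^ h := by
        gcongr
        · exact cc.diamJ_nonneg _
        · exact (cc.diamJ_append_le σ τ).trans
            (mul_le_mul_of_nonneg_right (cc.φnorm_le_xi_mul_diamJ σ) (cc.diamJ_nonneg τ))
    _ = cc.eta h * cc.xi ^ h * (cc.diamJ σ ^ h * cc.diamJ τ ^ h) := by
        rw [Real.mul_rpow (mul_nonneg cc.xi_nonneg (cc.diamJ_nonneg σ)) (cc.diamJ_nonneg τ),
          Real.mul_rpow cc.xi_nonneg (cc.diamJ_nonneg σ)]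
        ring
    _ ≤ cc.eta h * cc.xi ^ h *
          ((cc.eta h * (μ (cc.Jc σ)).toReal) * (cc.eta h * (μ (cc.Jc τ)).toReal)) := by
        have := Real.rpow_nonneg cc.xi_nonneg h
        have := Real.rpow_nonneg (cc.diamJ_nonneg τ) h
        gcongr
        exacts [hdiam hσ, hdiam hτ]
    _ = _ := by ring

lemma setIntegral_Jc_append_infDist_le (hh : 0 ≤ h) {r : ℝ} (hr : 0 ≤ r)
    {σ τ : List (Fin cc.N)} (hσ : σ ≠ []) (hτ : τ ≠ []) (α : Set ℝ) {ρ : ℝ}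
    (hρ : cc.diamJ τ ≤ ρ) :
    ∫ x in cc.Jc (σ ++ τ), infDist x (cc.clampedWordMap σ '' α) ^ r ∂μ ≤
      cc.eta h ^ 3 * cc.xi ^ h * (μ (cc.Jc σ)).toReal *
        ∫ y in cc.Jc τ, (cc.φnorm σ * (infDist y α + 2 * ρ)) ^ r ∂μ := by
  have := hμ.1
  have hφ := cc.φnorm_nonneg σ
  have hρ0 : 0 ≤ ρ := (cc.diamJ_nonneg τ).trans hρ
  have hclose : ∀ y ∈ cc.Jc τ, ∀ y' ∈ cc.Jc τ, infDist y α ≤ infDist y' α + ρ :=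
    fun y hy y' hy' => by
      linarith [infDist_le_infDist_add_dist (s := α) (x := y) (y := y'), cc.dist_le_diamJ _ hy hy']
  -- the value of the integrand at the reference point `z` separates the two sides
  set z := cc.wordMap τ 0
  have hz := cc.wordMap_zero_mem_Jc τ
  have hz0 : 0 ≤ cc.φnorm σ * (infDist z α + ρ) := mul_nonneg hφ (add_nonneg infDist_nonneg hρ0)
  refine setIntegral_le_mul_setIntegral_of_le_const (c := (cc.φnorm σ * (infDist z α + ρ)) ^ r)
    (cc.measurableSet_Jc _) (cc.measurableSet_Jc _)
    (hμ.integrable_infDist_rpow hr _).integrableOn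
    (hμ.integrable_rpow_mul_infDist_add hr α _ _).integrableOn (Real.rpow_nonneg hz0 r)
    (mul_nonneg (cc.eta_pow_mul_xi_rpow_nonneg h) ENNReal.toReal_nonneg)
    ((hμ.measure_Jc_append_le hh hσ hτ).trans_eq (by rw [measureReal_def]; ring)) ?_ ?_
  · rintro _ hx
    rw [Jc_append] at hx
    obtain ⟨y, hy, rfl⟩ := hx
    exact Real.rpow_le_rpow infDist_nonneg ((cc.infDist_wordMap_le σ α (cc.Jc_subset _ hy)).trans
      (mul_le_mul_of_nonneg_left (hclose y hy z hz) hφ)) hr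
  · intro y hy
    refine Real.rpow_le_rpow hz0 (mul_le_mul_of_nonneg_left ?_ hφ) hr
    linarith [hclose z hz y hy]

lemma setIntegral_Jc_infDist_le_integral_add (hh : 0 ≤ h) {r : ℝ} (hr : 0 ≤ r)
    {σ : List (Fin cc.N)} (hσ : σ ≠ []) (α : Set ℝ) {m : ℕ} (hm : 0 < m) :
    ∫ x in cc.Jc σ, infDist x (cc.clampedWordMap σ '' α) ^ r ∂μ ≤
      cc.eta h ^ 3 * cc.xi ^ h * (μ (cc.Jc σ)).toReal *
        ∫ y, (cc.φnorm σ * (infDist y α + 2 * cc.b⁻¹ ^ m)) ^ r ∂μ := by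
  have hK : 0 ≤ cc.eta h ^ 3 * cc.xi ^ h * (μ (cc.Jc σ)).toReal :=
    mul_nonneg (cc.eta_pow_mul_xi_rpow_nonneg h) ENNReal.toReal_nonneg
  have hpos : 0 ≤ 2 * cc.b⁻¹ ^ m := by have := cc.b_pos; positivity
  rw [cc.setIntegral_Jc_eq_sum hμ.2.1 σ hm (hμ.integrable_infDist_rpow hr _)]
  refine (Finset.sum_le_sum fun τ _ => hμ.setIntegral_Jc_append_infDist_le hh hr hσ
    (by simpa using hm.ne') α ((cc.diamJ_le_pow _).trans_eq (by rw [List.length_ofFn]))).trans ?_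
  rw [← Finset.mul_sum]
  exact mul_le_mul_of_nonneg_left (cc.sum_setIntegral_Jc_le_integral m
    (hμ.integrable_rpow_mul_infDist_add hr α _ _) fun y => Real.rpow_nonneg
      (mul_nonneg (cc.φnorm_nonneg σ) (add_nonneg infDist_nonneg hpos)) r) hK

lemma setIntegral_Jc_infDist_le (hh : 0 ≤ h) {r : ℝ} (hr : 0 ≤ r) {σ : List (Fin cc.N)}
    (hσ : σ ≠ []) (α : Set ℝ) :
    ∫ x in cc.Jc σ, infDist x (cc.clampedWordMap σ '' α) ^ r ∂μ ≤
      cc.eta h ^ 3 * cc.xi ^ h * (μ (cc.Jc σ)).toReal * cc.φnorm σ ^ r *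
        ∫ y, infDist y α ^ r ∂μ := by
  have hφ := cc.φnorm_nonneg σ
  have hb : 0 ≤ cc.b⁻¹ := inv_nonneg.2 cc.b_pos.le
  have hb1 : cc.b⁻¹ < 1 := inv_lt_one_of_one_lt₀ cc.hb1
  have hint := hμ.integrable_rpow_mul_infDist_add hr α (cc.φnorm σ)
  have hlim : Tendsto (fun m : ℕ => ∫ y, (cc.φnorm σ * (infDist y α + 2 * cc.b⁻¹ ^ (m + 1))) ^ r ∂μ)
      atTop (𝓝 (∫ y, (cc.φnorm σ * (infDist y α + 2 * 0)) ^ r ∂μ)) := by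
    refine tendsto_integral_of_dominated_convergence _ (fun m => (hint _).aestronglyMeasurable)
      (hint 2) (fun m => ae_of_all _ fun y => ?_) (ae_of_all _ fun y => ?_)
    · have hρ0 : 0 ≤ cc.b⁻¹ ^ (m + 1) := pow_nonneg hb _
      have hρ1 : cc.b⁻¹ ^ (m + 1) ≤ 1 := pow_le_one₀ hb hb1.le
      have hy : 0 ≤ cc.φnorm σ * (infDist y α + 2 * cc.b⁻¹ ^ (m + 1)) :=
        mul_nonneg hφ (add_nonneg infDist_nonneg (by linarith))
      rw [Real.norm_of_nonneg (Real.rpow_nonneg hy _)]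
      exact Real.rpow_le_rpow hy (mul_le_mul_of_nonneg_left (by linarith) hφ) hr
    · have hcont : Continuous fun t => (cc.φnorm σ * (infDist y α + 2 * t)) ^ r :=
        (continuous_const.mul (continuous_const.add (continuous_const.mul continuous_id)))
          |>.rpow_const fun _ => Or.inr hr
      exact (hcont.tendsto 0).comp
        ((tendsto_pow_atTop_nhds_zero_of_lt_one hb hb1).comp (tendsto_add_atTop_nat 1))
  refine (ge_of_tendsto' (hlim.const_mul _) fun m : ℕ =>
    hμ.setIntegral_Jc_infDist_le_integral_add hh hr hσ α m.succ_pos).trans_eq ?_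
  simp_rw [mul_zero, add_zero, Real.mul_rpow hφ infDist_nonneg, integral_const_mul, mul_assoc]

lemma Vnr_le_sum_integral (hh : 0 ≤ h) {r : ℝ} (hr : 0 ≤ r) {Γ : Finset (List (Fin cc.N))}
    (hΓ : cc.IsFMA Γ) {n : ℕ} (A : List (Fin cc.N) → Finset ℝ) (hA : ∀ σ ∈ Γ, (A σ).Nonempty)
    (hcard : ∑ σ ∈ Γ, (A σ).card ≤ n) :
    Vnr μ n r ≤ cc.eta h ^ 3 * cc.xi ^ h *
      ∑ σ ∈ Γ, (μ (cc.Jc σ)).toReal * cc.φnorm σ ^ r * ∫ y, infDist y (A σ : Set ℝ) ^ r ∂μ := by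
  set β := Γ.biUnion fun σ => (A σ).image (cc.clampedWordMap σ)
  have hint := hμ.integrable_infDist_rpow hr
  have hβ : ∀ σ ∈ Γ, cc.clampedWordMap σ '' (A σ : Set ℝ) ⊆ β := fun σ hσ => by
    rw [← Finset.coe_image]
    exact Finset.coe_subset.2
      (Finset.subset_biUnion_of_mem (fun σ => (A σ).image (cc.clampedWordMap σ)) hσ)
  obtain ⟨σ₀, hσ₀⟩ := hΓ.nonempty
  obtain ⟨a₀, ha₀⟩ := hA σ₀ hσ₀
  calc Vnr μ n r ≤ ∫ x, infDist x (β : Set ℝ) ^ r ∂μ :=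
        Vnr_le_integral μ r ⟨_, hβ σ₀ hσ₀ (mem_image_of_mem _ ha₀)⟩
          (Finset.card_biUnion_le.trans ((Finset.sum_le_sum fun σ _ => Finset.card_image_le).trans
            hcard))
    _ = ∑ σ ∈ Γ, ∫ x in cc.Jc σ, infDist x (β : Set ℝ) ^ r ∂μ :=
        cc.integral_eq_sum_setIntegral_Jc hμ.2.1 hΓ (hint _)
    _ ≤ ∑ σ ∈ Γ, ∫ x in cc.Jc σ, infDist x (cc.clampedWordMap σ '' (A σ : Set ℝ)) ^ r ∂μ :=
        Finset.sum_le_sum fun σ hσ => setIntegral_mono_on (hint _).integrableOn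
          (hint _).integrableOn (cc.measurableSet_Jc σ) fun x _ =>
            Real.rpow_le_rpow infDist_nonneg (infDist_le_infDist_of_subset (hβ σ hσ)
              ((Finset.coe_nonempty.2 (hA σ hσ)).image _)) hr
    _ ≤ ∑ σ ∈ Γ, cc.eta h ^ 3 * cc.xi ^ h * (μ (cc.Jc σ)).toReal * cc.φnorm σ ^ r *
          ∫ y, infDist y (A σ : Set ℝ) ^ r ∂μ :=
        Finset.sum_le_sum fun σ hσ => hμ.setIntegral_Jc_infDist_le hh hr (hΓ.1 σ hσ) _
    _ = _ := by rw [Finset.mul_sum]; simp_rw [mul_assoc]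

lemma Vnr_le_sum (hh : 0 ≤ h) {r : ℝ} (hr : 0 ≤ r) {Γ : Finset (List (Fin cc.N))}
    (hΓ : cc.IsFMA Γ) {n : ℕ} {nσ : List (Fin cc.N) → ℕ} (hnσ : ∀ σ ∈ Γ, 1 ≤ nσ σ)
    (hsum : ∑ σ ∈ Γ, nσ σ ≤ n) :
    Vnr μ n r ≤ cc.eta h ^ 3 * cc.xi ^ h *
      ∑ σ ∈ Γ, (μ (cc.Jc σ)).toReal * cc.φnorm σ ^ r * Vnr μ (nσ σ) r := by
  set C := cc.eta h ^ 3 * cc.xi ^ h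
  set w := fun σ => (μ (cc.Jc σ)).toReal * cc.φnorm σ ^ r
  have hC : 0 ≤ C := cc.eta_pow_mul_xi_rpow_nonneg h
  have hw : ∀ σ, 0 ≤ w σ := fun σ =>
    mul_nonneg ENNReal.toReal_nonneg (Real.rpow_nonneg (cc.φnorm_nonneg σ) r)
  refine le_of_forall_pos_le_add_mul (K := C * ∑ σ ∈ Γ, w σ)
    (mul_nonneg hC (Finset.sum_nonneg fun σ _ => hw σ)) fun ε hε => ?_
  choose! A hA hcard hA_le using fun σ (hσ : σ ∈ Γ) =>
    exists_integral_le_Vnr_add μ r (hnσ σ hσ) hε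
  calc Vnr μ n r ≤ C * ∑ σ ∈ Γ, w σ * ∫ y, infDist y (A σ : Set ℝ) ^ r ∂μ :=
        hμ.Vnr_le_sum_integral hh hr hΓ A hA ((Finset.sum_le_sum hcard).trans hsum)
    _ ≤ C * ∑ σ ∈ Γ, w σ * (Vnr μ (nσ σ) r + ε) :=
        mul_le_mul_of_nonneg_left (Finset.sum_le_sum fun σ hσ =>
          mul_le_mul_of_nonneg_left (hA_le σ hσ) (hw σ)) hC
    _ = C * ∑ σ ∈ Γ, w σ * Vnr μ (nσ σ) r + C * (∑ σ ∈ Γ, w σ) * ε := by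
        simp only [mul_add, Finset.sum_add_distrib, Finset.sum_mul, Finset.mul_sum, mul_assoc]

end IsGibbsLike

end CookieCutter

theorem Vnr_upper_bound_general (cc : CookieCutter)
    (h : ℝ) (hh0 : 0 < h)
    (μ : MeasureTheory.Measure ℝ) (hμ : cc.IsGibbsLike μ h)
    (Γ : Finset (List (Fin cc.N))) (hΓ : cc.IsFMA Γ)
    (n : ℕ) (r : ℝ) (hr : 0 < r) :
    ∀ nσ : List (Fin cc.N) → ℕ, (∀ σ ∈ Γ, 1 ≤ nσ σ) → (∑ σ ∈ Γ, nσ σ) ≤ n →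
      Vnr μ n r ≤
        cc.Lconst h *
          ∑ σ ∈ Γ, (μ (cc.Jc σ)).toReal * cc.φnorm σ ^ r * Vnr μ (nσ σ) r := by
  intro nσ hnσ hsum
  have hconst : cc.eta h ^ 3 * cc.xi ^ h ≤ cc.Lconst h :=
    mul_le_mul_of_nonneg_left (Real.rpow_le_rpow_of_exponent_le cc.one_le_xi (by linarith))
      (pow_nonneg (cc.eta_pos h).le 3)
  refine (hμ.Vnr_le_sum hh0.le hr.le hΓ hnσ hsum).trans (mul_le_mul_of_nonneg_right hconst ?_)
  exact Finset.sum_nonneg fun σ _ => mul_nonneg (mul_nonneg ENNReal.toReal_nonneg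
    (Real.rpow_nonneg (cc.φnorm_nonneg σ) r)) (Vnr_nonneg μ _ r)

theorem Vnr_upper_bound (cc : CookieCutter) (Q : ℝ → ℝ)
    (hQ : ∀ t : ℝ, Filter.Tendsto
      (fun k : ℕ => (1 / (k : ℝ)) * Real.log
        (∑ σ : Fin k → Fin cc.N, cc.φnorm (List.ofFn σ) ^ t))
      Filter.atTop (nhds (Q t)))
    (h : ℝ) (hh0 : 0 < h) (hQh : Q h = 0)
    (μ : MeasureTheory.Measure ℝ) (hμ : cc.IsGibbsLike μ h)
    (Γ : Finset (List (Fin cc.N))) (hΓ : cc.IsFMA Γ)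
    (n : ℕ) (hn : Γ.card ≤ n) (r : ℝ) (hr : 0 < r) :
    ∀ nσ : List (Fin cc.N) → ℕ, (∀ σ ∈ Γ, 1 ≤ nσ σ) → (∑ σ ∈ Γ, nσ σ) ≤ n →
      Vnr μ n r ≤
        cc.Lconst h *
          ∑ σ ∈ Γ, (μ (cc.Jc σ)).toReal * cc.φnorm σ ^ r * Vnr μ (nσ σ) r :=
  Vnr_upper_bound_general cc h hh0 μ hμ Γ hΓ n r hr
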